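/- arXiv:2108.06443 — 3 statements merged into one kernel-verified Lean document; each statement's English description precedes it below -/
import Mathlib

section
/- Let A = PᵀΛP be symmetric positive definite with P orthogonal, S = Λ^{-1/2}P, and x̂ = Sx. If (v, σ) solves the anisotropic first-order acoustic system A^{1/2}∇v + ∂σ/∂t = 0, ∇·(A^{1/2}σ) + c^{-2} ∂v/∂t = 0, then (v̂, σ̂) defined by v̂(x̂,t) = v(S⁻¹x̂, t), σ̂(x̂,t) = P σ(S⁻¹x̂, t) solves the isotropic system ∇̂v̂ + ∂σ̂/∂t = 0, ∇̂·σ̂ + c^{-2} ∂v̂/∂t = 0. -/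
open Matrix

/-- Gradient (in the space variable) of a scalar field on `Fin d → ℝ`. -/
noncomputable def grad {d : ℕ} (v : (Fin d → ℝ) → ℝ) (x : Fin d → ℝ) : Fin d → ℝ :=
  fun i => fderiv ℝ v x (Pi.single i 1)

/-- Divergence (in the space variable) of a vector field on `Fin d → ℝ`. -/
noncomputable def divg {d : ℕ} (σ : (Fin d → ℝ) → (Fin d → ℝ)) (x : Fin d → ℝ) : ℝ :=
  ∑ i, fderiv ℝ σ x (Pi.single i 1) i

/-- The matrix `Λ^{1/2}` for `Λ = diag lam`. -/
noncomputable def sqrtDiag {d : ℕ} (lam : Fin d → ℝ) : Matrix (Fin d) (Fin d) ℝ :=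
  Matrix.diagonal fun i => Real.sqrt (lam i)

/-- The coordinate transformation matrix `S = Λ^{-1/2} P`. -/
noncomputable def Smat {d : ℕ} (P : Matrix (Fin d) (Fin d) ℝ) (lam : Fin d → ℝ) :
    Matrix (Fin d) (Fin d) ℝ :=
  (Matrix.diagonal fun i => (Real.sqrt (lam i))⁻¹) * P

/-- The inverse transformation matrix `S⁻¹ = Pᵀ Λ^{1/2}`. -/
noncomputable def Sinv {d : ℕ} (P : Matrix (Fin d) (Fin d) ℝ) (lam : Fin d → ℝ) :
    Matrix (Fin d) (Fin d) ℝ :=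
  Pᵀ * sqrtDiag lam

/-!
Since `S⁻¹ = Pᵀ Λ^{1/2}`, the chain rule gives `∇̂ v̂ = (S⁻¹)ᵀ ∇v = P A^{1/2} ∇v` (using `P Pᵀ = 1`),
so the first isotropic equation is `P` applied to the first anisotropic one. For the second,
the Jacobian of `σ̂` at `x̂` is `P J S⁻¹` with `J` that of `σ`, and by cyclicity of the trace
`tr (P J S⁻¹) = tr (S⁻¹ P J) = tr (A^{1/2} J)`, which is `∇·(A^{1/2}σ)`.
-/

namespace Matrix

variable {m n : Type*} [Fintype n] [DecidableEq n]

noncomputable def mulVecCLM (M : Matrix m n ℝ) : (n → ℝ) →L[ℝ] (m → ℝ) :=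
  LinearMap.toContinuousLinearMap (toLin' M)

@[simp] lemma mulVecCLM_apply (M : Matrix m n ℝ) (x : n → ℝ) : M.mulVecCLM x = M *ᵥ x := rfl

@[simp] lemma toMatrix'_mulVecCLM (M : Matrix m n ℝ) :
    LinearMap.toMatrix' (M.mulVecCLM : (n → ℝ) →ₗ[ℝ] m → ℝ) = M :=
  LinearMap.toMatrix'_toLin' M

end Matrix

section MatrixChainRule

variable {m n : Type*} [Fintype m] [Fintype n] [DecidableEq n]
  {E : Type*} [NormedAddCommGroup E] [NormedSpace ℝ E]

lemma fderiv_comp_mulVec (M : Matrix m n ℝ) {f : (m → ℝ) → E} {y : n → ℝ}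
    (hf : DifferentiableAt ℝ f (M *ᵥ y)) :
    fderiv ℝ (fun z => f (M *ᵥ z)) y = (fderiv ℝ f (M *ᵥ y)).comp M.mulVecCLM := by
  rw [← M.mulVecCLM.fderiv]
  exact fderiv_comp y hf M.mulVecCLM.differentiableAt

lemma fderiv_mulVec_comp (M : Matrix m n ℝ) {g : E → n → ℝ} {x : E}
    (hg : DifferentiableAt ℝ g x) :
    fderiv ℝ (fun z => M *ᵥ g z) x = M.mulVecCLM.comp (fderiv ℝ g x) := by
  rw [← M.mulVecCLM.fderiv]
  exact fderiv_comp x M.mulVecCLM.differentiableAt hg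

lemma deriv_mulVec (M : Matrix m n ℝ) {f : ℝ → n → ℝ} {t : ℝ} (hf : DifferentiableAt ℝ f t) :
    deriv (fun s => M *ᵥ f s) t = M *ᵥ deriv f t :=
  (M.mulVecCLM.hasFDerivAt.comp_hasDerivAt t hf.hasDerivAt).deriv

end MatrixChainRule

section GradDiv

variable {d e k : ℕ}

lemma fderiv_apply_eq_grad_dotProduct (f : (Fin d → ℝ) → ℝ) (x u : Fin d → ℝ) :
    fderiv ℝ f x u = grad f x ⬝ᵥ u := by
  conv_lhs => rw [← Finset.univ_sum_single u]
  simp only [map_sum, dotProduct, grad, mul_comm]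
  refine Finset.sum_congr rfl fun j _ => ?_
  rw [← smul_eq_mul, ← map_smul, ← Pi.single_smul, smul_eq_mul, mul_one]

lemma grad_comp_mulVec (M : Matrix (Fin d) (Fin e) ℝ) {f : (Fin d → ℝ) → ℝ} {y : Fin e → ℝ}
    (hf : DifferentiableAt ℝ f (M *ᵥ y)) :
    grad (fun z => f (M *ᵥ z)) y = Mᵀ *ᵥ grad f (M *ᵥ y) := by
  funext i
  rw [grad, fderiv_comp_mulVec M hf, ContinuousLinearMap.comp_apply, mulVecCLM_apply,
    mulVec_single_one, fderiv_apply_eq_grad_dotProduct, dotProduct_comm]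
  rfl

lemma divg_eq_trace (g : (Fin d → ℝ) → Fin d → ℝ) (x : Fin d → ℝ) :
    divg g x = (LinearMap.toMatrix' (fderiv ℝ g x : (Fin d → ℝ) →ₗ[ℝ] Fin d → ℝ)).trace := by
  simp [divg, trace, LinearMap.toMatrix'_apply]

lemma divg_mulVec_comp_mulVec (M : Matrix (Fin d) (Fin e) ℝ) (N : Matrix (Fin e) (Fin k) ℝ)
    {g : (Fin d → ℝ) → Fin k → ℝ} {y : Fin e → ℝ} (hg : DifferentiableAt ℝ g (M *ᵥ y)) :
    divg (fun z => N *ᵥ g (M *ᵥ z)) y = divg (fun z => (M * N) *ᵥ g z) (M *ᵥ y) := by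
  have hgM : DifferentiableAt ℝ (fun z => g (M *ᵥ z)) y :=
    hg.comp y M.mulVecCLM.differentiableAt
  rw [divg_eq_trace, divg_eq_trace, fderiv_mulVec_comp N hgM, fderiv_comp_mulVec M hg,
    fderiv_mulVec_comp (M * N) hg]
  simp only [ContinuousLinearMap.toLinearMap_comp, LinearMap.toMatrix'_comp, toMatrix'_mulVecCLM]
  rw [← Matrix.mul_assoc, trace_mul_cycle]

end GradDiv

lemma transpose_Sinv {d : ℕ} {P : Matrix (Fin d) (Fin d) ℝ} (hP : P * Pᵀ = 1) (lam : Fin d → ℝ) :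
    (Sinv P lam)ᵀ = P * (Pᵀ * sqrtDiag lam * P) := by
  rw [Sinv, transpose_mul, transpose_transpose, sqrtDiag, diagonal_transpose, Matrix.mul_assoc,
    ← Matrix.mul_assoc P, hP, Matrix.one_mul]

theorem stmt3_general {d : ℕ} (P : Matrix (Fin d) (Fin d) ℝ) (lam : Fin d → ℝ)
    (hP : Pᵀ * P = 1)
    (c : ℝ)
    (v : (Fin d → ℝ) → ℝ → ℝ) (σ : (Fin d → ℝ) → ℝ → (Fin d → ℝ))
    (hv : ContDiff ℝ 1 fun p : (Fin d → ℝ) × ℝ => v p.1 p.2)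
    (hσ : ContDiff ℝ 1 fun p : (Fin d → ℝ) × ℝ => σ p.1 p.2)
    (heq1 : ∀ (x : Fin d → ℝ) (t : ℝ),
      (Pᵀ * sqrtDiag lam * P).mulVec (grad (fun y => v y t) x) + deriv (σ x) t = 0)
    (heq2 : ∀ (x : Fin d → ℝ) (t : ℝ),
      divg (fun y => (Pᵀ * sqrtDiag lam * P).mulVec (σ y t)) x
        + (c ^ 2)⁻¹ * deriv (fun s => v x s) t = 0) :
    (∀ (y : Fin d → ℝ) (t : ℝ),
      grad (fun z => v ((Sinv P lam).mulVec z) t) y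
        + deriv (fun s => P.mulVec (σ ((Sinv P lam).mulVec y) s)) t = 0) ∧
    (∀ (y : Fin d → ℝ) (t : ℝ),
      divg (fun z => P.mulVec (σ ((Sinv P lam).mulVec z) t)) y
        + (c ^ 2)⁻¹ * deriv (fun s => v ((Sinv P lam).mulVec y) s) t = 0) := by
  have hvd := hv.differentiable one_ne_zero
  have hσd := hσ.differentiable one_ne_zero
  have hv_space : ∀ t, Differentiable ℝ (fun x => v x t) := fun t => by fun_prop
  have hσ_space : ∀ t, Differentiable ℝ (fun x => σ x t) := fun t => by fun_prop
  have hσ_time : ∀ x, Differentiable ℝ (σ x) := fun x => by fun_prop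
  refine ⟨fun y t => ?_, fun y t => ?_⟩
  · rw [grad_comp_mulVec _ (hv_space t _), deriv_mulVec P (hσ_time _ t),
      transpose_Sinv (mul_eq_one_comm.mp hP), ← mulVec_mulVec, ← mulVec_add, heq1, mulVec_zero]
  · rw [divg_mulVec_comp_mulVec _ P (hσ_space t _)]
    exact heq2 _ t

theorem stmt3 {d : ℕ} (A P : Matrix (Fin d) (Fin d) ℝ) (lam : Fin d → ℝ)
    (hpos : ∀ i, 0 < lam i) (hP : Pᵀ * P = 1)
    (hA : A = Pᵀ * Matrix.diagonal lam * P)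
    (c : ℝ) (hc : 0 < c)
    (v : (Fin d → ℝ) → ℝ → ℝ) (σ : (Fin d → ℝ) → ℝ → (Fin d → ℝ))
    (hv : ContDiff ℝ 1 fun p : (Fin d → ℝ) × ℝ => v p.1 p.2)
    (hσ : ContDiff ℝ 1 fun p : (Fin d → ℝ) × ℝ => σ p.1 p.2)
    (heq1 : ∀ (x : Fin d → ℝ) (t : ℝ),
      (Pᵀ * sqrtDiag lam * P).mulVec (grad (fun y => v y t) x) + deriv (σ x) t = 0)
    (heq2 : ∀ (x : Fin d → ℝ) (t : ℝ),
      divg (fun y => (Pᵀ * sqrtDiag lam * P).mulVec (σ y t)) x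
        + (c ^ 2)⁻¹ * deriv (fun s => v x s) t = 0) :
    (∀ (y : Fin d → ℝ) (t : ℝ),
      grad (fun z => v ((Sinv P lam).mulVec z) t) y
        + deriv (fun s => P.mulVec (σ ((Sinv P lam).mulVec y) s)) t = 0) ∧
    (∀ (y : Fin d → ℝ) (t : ℝ),
      divg (fun z => P.mulVec (σ ((Sinv P lam).mulVec z) t)) y
        + (c ^ 2)⁻¹ * deriv (fun s => v ((Sinv P lam).mulVec y) s) t = 0) :=
  stmt3_general P lam hP c v σ hv hσ heq1 heq2
end

section
/- The space of polynomials of total degree ≤ p in the d+1 variables (t, x₁,…,x_d) that satisfy the wave equation −ΔU + c^{-2}∂²U/∂t² = 0 has dimension C(p+d, d) + C(p−1+d, d), where C(n,k) denotes the binomial coefficient. -/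
open MvPolynomial

/-- The wave operator `U ↦ c⁻²∂²U/∂t² − ΔU` on polynomials in the variables
`Option (Fin d)`, where `none` plays the role of the time variable `t` and
`some m` the space variable `x_m`. -/
noncomputable def waveOp {d : ℕ} (c : ℝ) :
    MvPolynomial (Option (Fin d)) ℝ →ₗ[ℝ] MvPolynomial (Option (Fin d)) ℝ :=
  (c ^ 2)⁻¹ • ((pderiv (none : Option (Fin d))).toLinearMap ∘ₗ
      (pderiv (none : Option (Fin d))).toLinearMap)
    - ∑ m : Fin d, (pderiv (some m)).toLinearMap ∘ₗ (pderiv (some m)).toLinearMap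

/-!
For `p ≥ 2` the wave operator maps the polynomials of degree `≤ p` onto those of degree
`≤ p - 2`, so by rank–nullity the solution space has dimension `dim ℙ^p − dim ℙ^(p-2)`, the
number of monomials in `d + 1` variables of degree exactly `p` or `p - 1`; for `p ≤ 1` every
polynomial is a solution. For surjectivity, `S = c² ∫∫ dt` is a right inverse of `c⁻² ∂²/∂t²`
commuting with the spatial Laplacian `Δ`, and `Δ` is locally nilpotent, so the finite Neumann
series `U = S ∑ₖ (Δ S)ᵏ g` solves `c⁻² ∂²U/∂t² − ΔU = g`.
-/

open Finset

namespace MvPolynomial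

section Degree

variable {σ R : Type*} [CommRing R] [Nontrivial R]

theorem finrank_restrictTotalDegree [Fintype σ] (N : ℕ) :
    Module.finrank R (restrictTotalDegree σ R N) =
      ∑ k ∈ range (N + 1), (Fintype.card σ + k - 1).choose k := by
  classical
  have hset : {n : σ →₀ ℕ | (n.sum fun _ e => e) ≤ N} =
      ↑((range (N + 1)).biUnion fun k => (univ : Finset σ).finsuppAntidiag k) := by
    ext n
    simp [Finsupp.sum_fintype]
  rw [restrictTotalDegree, Module.finrank_eq_nat_card_basis (basisRestrictSupport R _), hset,
    Nat.card_coe_set_eq, Set.ncard_coe_finset, card_biUnion]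
  · simp [card_finsuppAntidiag_nat_eq_choose]
  · intro k _ l _ hkl
    simp only [Function.onFun, disjoint_left, mem_finsuppAntidiag]
    rintro n ⟨rfl, -⟩ ⟨h, -⟩
    exact hkl h

theorem finrank_restrictTotalDegree_option_fin {d : ℕ} (N : ℕ) :
    Module.finrank R (restrictTotalDegree (Option (Fin d)) R N) =
      ∑ k ∈ range (N + 1), (k + d).choose d := by
  rw [finrank_restrictTotalDegree]
  refine sum_congr rfl fun k _ => ?_
  rw [Fintype.card_option, Fintype.card_fin, show d + 1 + k - 1 = k + d by omega]
  exact Nat.choose_symm_add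

end Degree

section Derivative

variable {σ R : Type*} [CommSemiring R]

lemma mem_restrictTotalDegree_iff_coeff {N : ℕ} {f : MvPolynomial σ R} :
    f ∈ restrictTotalDegree σ R N ↔ ∀ m, coeff m f ≠ 0 → m.degree ≤ N := by
  simp only [mem_restrictTotalDegree, totalDegree, Finset.sup_le_iff, mem_support_iff]
  rfl

lemma restrictTotalDegree_mono : Monotone (restrictTotalDegree σ R) := fun _ _ hmn _ hf =>
  (mem_restrictTotalDegree _ _ _).2 (((mem_restrictTotalDegree _ _ _).1 hf).trans hmn)

lemma pderiv_mem_restrictTotalDegree (i : σ) {N : ℕ} {f : MvPolynomial σ R}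
    (hf : f ∈ restrictTotalDegree σ R (N + 1)) : pderiv i f ∈ restrictTotalDegree σ R N := by
  rw [mem_restrictTotalDegree_iff_coeff] at hf ⊢
  intro m hm
  rw [coeff_pderiv] at hm
  simpa using hf _ (left_ne_zero_of_mul hm)

lemma pderiv_eq_zero_of_mem_restrictTotalDegree_zero (i : σ) {f : MvPolynomial σ R}
    (hf : f ∈ restrictTotalDegree σ R 0) : pderiv i f = 0 := by
  rw [mem_restrictTotalDegree_iff_coeff] at hf
  ext m
  rw [coeff_pderiv, coeff_zero]
  by_contra hm
  simpa using hf _ (left_ne_zero_of_mul hm)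

lemma pderiv_pderiv_mem_restrictTotalDegree (i j : σ) {N : ℕ} {f : MvPolynomial σ R}
    (hf : f ∈ restrictTotalDegree σ R (N + 2)) :
    pderiv j (pderiv i f) ∈ restrictTotalDegree σ R N :=
  pderiv_mem_restrictTotalDegree j (pderiv_mem_restrictTotalDegree i hf)

lemma pderiv_pderiv_eq_zero_of_mem_restrictTotalDegree_one (i j : σ) {f : MvPolynomial σ R}
    (hf : f ∈ restrictTotalDegree σ R 1) : pderiv j (pderiv i f) = 0 :=
  pderiv_eq_zero_of_mem_restrictTotalDegree_zero j (pderiv_mem_restrictTotalDegree i hf)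

end Derivative

section Antiderivative

variable {σ K : Type*} [Field K]

noncomputable def pintegral (i : σ) : MvPolynomial σ K →ₗ[K] MvPolynomial σ K :=
  (basisMonomials σ K).constr K fun n =>
    ((n i : K) + 1)⁻¹ • monomial (n + Finsupp.single i 1) 1

lemma pintegral_monomial (i : σ) (n : σ →₀ ℕ) (a : K) :
    pintegral i (monomial n a) = ((n i : K) + 1)⁻¹ • monomial (n + Finsupp.single i 1) a := by
  rw [← mul_one a, ← smul_eq_mul, ← smul_monomial, ← smul_monomial, map_smul,
    show monomial n (1 : K) = basisMonomials σ K n by simp, pintegral, Module.Basis.constr_basis,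
    smul_comm]

lemma pintegral_mem_restrictTotalDegree (i : σ) {N : ℕ} {f : MvPolynomial σ K}
    (hf : f ∈ restrictTotalDegree σ K N) :
    pintegral i f ∈ restrictTotalDegree σ K (N + 1) := by
  rw [f.as_sum, map_sum]
  refine Submodule.sum_mem _ fun n hn => ?_
  rw [pintegral_monomial]
  refine Submodule.smul_mem _ _ ((mem_restrictTotalDegree _ _ _).2 ?_)
  have hn : n.degree ≤ N := (le_totalDegree hn).trans ((mem_restrictTotalDegree _ _ _).1 hf)
  refine (totalDegree_monomial_le _ _).trans ?_
  change Finsupp.degree _ ≤ _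
  simpa using hn

lemma pderiv_pintegral [CharZero K] (i : σ) (f : MvPolynomial σ K) :
    pderiv i (pintegral i f) = f := by
  induction f using MvPolynomial.induction_on' with
  | add p q hp hq => rw [map_add, map_add, hp, hq]
  | monomial n a =>
    rw [pintegral_monomial, Derivation.map_smul, pderiv_monomial, add_tsub_cancel_right,
      smul_monomial, smul_eq_mul, Finsupp.add_apply, Finsupp.single_eq_same, Nat.cast_add,
      Nat.cast_one, mul_comm a, inv_mul_cancel_left₀ (Nat.cast_add_one_ne_zero _)]

lemma pderiv_pintegral_of_ne {i j : σ} (hij : j ≠ i) (f : MvPolynomial σ K) :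
    pderiv j (pintegral i f) = pintegral i (pderiv j f) := by
  induction f using MvPolynomial.induction_on' with
  | add p q hp hq => rw [map_add, map_add, map_add, map_add, hp, hq]
  | monomial n a =>
    classical
    have hexp : n + Finsupp.single i 1 - Finsupp.single j 1 =
        n - Finsupp.single j 1 + Finsupp.single i 1 := by
      ext k
      simp only [Finsupp.add_apply, Finsupp.tsub_apply, Finsupp.single_apply]
      split_ifs with hi hj
      exacts [absurd (hj.trans hi.symm) hij, by omega, by omega, rfl]
    rw [pintegral_monomial, Derivation.map_smul, pderiv_monomial, pderiv_monomial,
      pintegral_monomial]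
    simp [hexp, hij]

end Antiderivative

end MvPolynomial

theorem Submodule.finrank_map_add_finrank_inf_ker {K V W : Type*} [DivisionRing K]
    [AddCommGroup V] [Module K V] [AddCommGroup W] [Module K W] (f : V →ₗ[K] W)
    (p : Submodule K V) [FiniteDimensional K p] :
    Module.finrank K (p.map f) + Module.finrank K ↥(p ⊓ LinearMap.ker f) =
      Module.finrank K p := by
  rw [← LinearMap.range_domRestrict, ← (f.domRestrict p).finrank_range_add_finrank_ker,
    LinearMap.ker_domRestrict]
  congr 1
  rw [← (Submodule.comapSubtypeEquivOfLe (inf_le_left : p ⊓ LinearMap.ker f ≤ p)).finrank_eq,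
    Submodule.comap_inf, Submodule.comap_subtype_self, top_inf_eq]

namespace Module.End

variable {R M : Type*} [Ring R] [AddCommGroup M] [Module R M]

theorem sub_apply_geom_sum_eq_of_pow_apply_eq_zero {A B S : Module.End R M} (hAS : A * S = 1)
    (hBS : Commute B S) {y : M} {n : ℕ} (hy : (B ^ n) y = 0) :
    (A - B) (S (∑ k ∈ range n, ((B * S) ^ k) y)) = y := by
  have hsub : (A - B) * S = 1 - B * S := by rw [sub_mul, hAS]
  have hpow : ((B * S) ^ n) y = 0 := by
    rw [hBS.mul_pow, (hBS.pow_pow n n).eq, mul_apply, hy, map_zero]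
  calc (A - B) (S (∑ k ∈ range n, ((B * S) ^ k) y))
      = ((1 - B * S) * ∑ k ∈ range n, (B * S) ^ k) y := by
        rw [← hsub, mul_apply, mul_apply, LinearMap.sum_apply]
    _ = y := by rw [mul_neg_geom_sum, LinearMap.sub_apply, hpow, sub_zero, one_apply]

end Module.End

section WaveOperator

noncomputable def spaceLaplacian (d : ℕ) : Module.End ℝ (MvPolynomial (Option (Fin d)) ℝ) :=
  ∑ m : Fin d, (pderiv (some m)).toLinearMap ∘ₗ (pderiv (some m)).toLinearMap

variable {d : ℕ}

noncomputable def scaledTimeDeriv2 (c : ℝ) : Module.End ℝ (MvPolynomial (Option (Fin d)) ℝ) :=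
  (c ^ 2)⁻¹ • ((pderiv none).toLinearMap * (pderiv none).toLinearMap)

noncomputable def scaledTimeIntegral2 (c : ℝ) :
    Module.End ℝ (MvPolynomial (Option (Fin d)) ℝ) :=
  c ^ 2 • (pintegral none * pintegral none)

lemma waveOp_eq (c : ℝ) : waveOp (d := d) c = scaledTimeDeriv2 c - spaceLaplacian d :=
  rfl

lemma scaledTimeDeriv2_mul_scaledTimeIntegral2 {c : ℝ} (hc : c ≠ 0) :
    scaledTimeDeriv2 (d := d) c * scaledTimeIntegral2 c = 1 := by
  have hDJ : (pderiv (R := ℝ) none).toLinearMap * pintegral (none : Option (Fin d)) = 1 :=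
    LinearMap.ext (pderiv_pintegral none)
  rw [scaledTimeDeriv2, scaledTimeIntegral2, smul_mul_smul_comm,
    inv_mul_cancel₀ (pow_ne_zero 2 hc), one_smul, mul_assoc, ← mul_assoc _ (pintegral none),
    hDJ, one_mul, hDJ]

lemma scaledTimeIntegral2_mem_restrictTotalDegree (c : ℝ) {N : ℕ}
    {f : MvPolynomial (Option (Fin d)) ℝ} (hf : f ∈ restrictTotalDegree _ ℝ N) :
    scaledTimeIntegral2 c f ∈ restrictTotalDegree _ ℝ (N + 2) := by
  rw [scaledTimeIntegral2, LinearMap.smul_apply, Module.End.mul_apply]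
  exact Submodule.smul_mem _ _
    (pintegral_mem_restrictTotalDegree _ (pintegral_mem_restrictTotalDegree _ hf))

lemma spaceLaplacian_apply (f : MvPolynomial (Option (Fin d)) ℝ) :
    spaceLaplacian d f = ∑ m : Fin d, pderiv (some m) (pderiv (some m) f) := by
  simp [spaceLaplacian]

lemma spaceLaplacian_mem_restrictTotalDegree {N : ℕ} {f : MvPolynomial (Option (Fin d)) ℝ}
    (hf : f ∈ restrictTotalDegree _ ℝ (N + 2)) :
    spaceLaplacian d f ∈ restrictTotalDegree _ ℝ N := by
  rw [spaceLaplacian_apply]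
  exact Submodule.sum_mem _ fun m _ => pderiv_pderiv_mem_restrictTotalDegree _ _ hf

lemma spaceLaplacian_eq_zero_of_mem_restrictTotalDegree_one {f : MvPolynomial (Option (Fin d)) ℝ}
    (hf : f ∈ restrictTotalDegree _ ℝ 1) : spaceLaplacian d f = 0 := by
  rw [spaceLaplacian_apply]
  exact sum_eq_zero fun m _ => pderiv_pderiv_eq_zero_of_mem_restrictTotalDegree_one _ _ hf

lemma spaceLaplacian_pow_apply_eq_zero (k : ℕ) {f : MvPolynomial (Option (Fin d)) ℝ}
    (hf : f ∈ restrictTotalDegree _ ℝ (2 * k + 1)) : (spaceLaplacian d ^ (k + 1)) f = 0 := by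
  induction k generalizing f with
  | zero => exact spaceLaplacian_eq_zero_of_mem_restrictTotalDegree_one hf
  | succ k ih =>
    rw [pow_succ, Module.End.mul_apply]
    exact ih (spaceLaplacian_mem_restrictTotalDegree hf)

lemma commute_spaceLaplacian_pintegral_none :
    Commute (spaceLaplacian d) (pintegral (none : Option (Fin d))) := by
  refine LinearMap.ext fun f => ?_
  simp only [Module.End.mul_apply, spaceLaplacian_apply, map_sum,
    pderiv_pintegral_of_ne (Option.some_ne_none _)]

lemma commute_spaceLaplacian_scaledTimeIntegral2 (c : ℝ) :
    Commute (spaceLaplacian d) (scaledTimeIntegral2 c) :=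
  (commute_spaceLaplacian_pintegral_none.mul_right
    commute_spaceLaplacian_pintegral_none).smul_right _

lemma waveOp_mem_restrictTotalDegree (c : ℝ) {N : ℕ} {f : MvPolynomial (Option (Fin d)) ℝ}
    (hf : f ∈ restrictTotalDegree _ ℝ (N + 2)) : waveOp c f ∈ restrictTotalDegree _ ℝ N :=
  Submodule.sub_mem _
    (Submodule.smul_mem _ _ (pderiv_pderiv_mem_restrictTotalDegree _ _ hf))
    (spaceLaplacian_mem_restrictTotalDegree hf)

lemma restrictTotalDegree_one_le_ker_waveOp (c : ℝ) :
    restrictTotalDegree (Option (Fin d)) ℝ 1 ≤ LinearMap.ker (waveOp c) := fun f hf => by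
  rw [LinearMap.mem_ker, waveOp_eq, LinearMap.sub_apply, scaledTimeDeriv2, LinearMap.smul_apply,
    Module.End.mul_apply, spaceLaplacian_eq_zero_of_mem_restrictTotalDegree_one hf]
  simp [pderiv_pderiv_eq_zero_of_mem_restrictTotalDegree_one _ _ hf]

lemma exists_waveOp_eq {c : ℝ} (hc : c ≠ 0) {q : ℕ} {g : MvPolynomial (Option (Fin d)) ℝ}
    (hg : g ∈ restrictTotalDegree _ ℝ q) :
    ∃ U ∈ restrictTotalDegree _ ℝ (q + 2), waveOp c U = g := by
  set ΔS := spaceLaplacian d * scaledTimeIntegral2 (d := d) c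
  have hΔS : ∀ f ∈ restrictTotalDegree _ ℝ q, ΔS f ∈ restrictTotalDegree _ ℝ q :=
    fun f hf =>
      spaceLaplacian_mem_restrictTotalDegree (scaledTimeIntegral2_mem_restrictTotalDegree c hf)
  refine ⟨scaledTimeIntegral2 c (∑ k ∈ range (q + 1), (ΔS ^ k) g),
    scaledTimeIntegral2_mem_restrictTotalDegree c
      (Submodule.sum_mem _ fun k _ => Module.End.pow_apply_mem_of_forall_mem k hΔS g hg), ?_⟩
  rw [waveOp_eq]
  refine Module.End.sub_apply_geom_sum_eq_of_pow_apply_eq_zero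
    (scaledTimeDeriv2_mul_scaledTimeIntegral2 hc) (commute_spaceLaplacian_scaledTimeIntegral2 c) ?_
  exact spaceLaplacian_pow_apply_eq_zero q (restrictTotalDegree_mono (by omega) hg)

lemma map_waveOp_restrictTotalDegree {c : ℝ} (hc : c ≠ 0) (q : ℕ) :
    (restrictTotalDegree (Option (Fin d)) ℝ (q + 2)).map (waveOp c) =
      restrictTotalDegree _ ℝ q := by
  refine le_antisymm
    (Submodule.map_le_iff_le_comap.2 fun f hf => waveOp_mem_restrictTotalDegree c hf)
    fun g hg => ?_
  obtain ⟨U, hU, rfl⟩ := exists_waveOp_eq hc hg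
  exact Submodule.mem_map_of_mem hU

end WaveOperator

theorem stmt5 {d p : ℕ} (c : ℝ) (hc : 0 < c) :
    Module.finrank ℝ
        ↥(MvPolynomial.restrictTotalDegree (Option (Fin d)) ℝ p ⊓
            LinearMap.ker (waveOp (d := d) c)) =
      (p + d).choose d + (if p = 0 then 0 else (p - 1 + d).choose d) := by
  rcases Nat.lt_or_ge p 2 with hp | hp
  · have hker := (restrictTotalDegree_mono (Nat.le_of_lt_succ hp)).trans
      (restrictTotalDegree_one_le_ker_waveOp (d := d) c)
    rw [inf_eq_left.2 hker, finrank_restrictTotalDegree_option_fin]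
    interval_cases p <;> simp [sum_range_succ, add_comm]
  · obtain ⟨q, rfl⟩ := Nat.exists_eq_add_of_le' hp
    have hrank := Submodule.finrank_map_add_finrank_inf_ker (waveOp (d := d) c)
      (restrictTotalDegree _ ℝ (q + 2))
    rw [map_waveOp_restrictTotalDegree hc.ne', finrank_restrictTotalDegree_option_fin,
      finrank_restrictTotalDegree_option_fin] at hrank
    simp only [sum_range_succ] at hrank
    rw [if_neg (by omega), show q + 2 - 1 = q + 1 by omega]
    omega
end

section
/- Every pair of polynomial Cauchy data (b, b̃) with b ∈ ℙ^p(ℝ^d) and b̃ ∈ ℙ^{p−1}(ℝ^d) extends uniquely to a polynomial U ∈ ℙ^p(ℝ^{1+d}) satisfying −ΔU + c^{-2}∂²U/∂t² = 0 with U(x,0) = b(x) and ∂_t U(x,0) = b̃(x); the extension is given by the time-Taylor recursion ∂_t^{k} U(·,0) determined from b, b̃ via a_{k,α} = (c²/(k(k−1))) Σ_m (α_m+2)(α_m+1) a_{k−2,α+2e_m}. -/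
/-!
Write `U = ∑ₖ tᵏ Aₖ(x)`. Comparing coefficients, the wave equation says exactly that
`Aₖ₊₂ = c² / ((k + 2)(k + 1)) • Δ Aₖ`, while the Cauchy data are `A₀ = b` and `A₁ = b̃`;
so the data determine every `Aₖ`. Conversely, define `Aₖ` by this recursion: since `Δ`
lowers degrees by two, every monomial `xᵅ` of `Aₖ` has `k + |α| ≤ p`. In particular
`Aₖ = 0` for `k > p`, so the series is a polynomial of total degree at most `p`.
-/

open MvPolynomial

/-- The exponent of the monomial `t^k x^α`. -/
noncomputable def expo {d : ℕ} (k : ℕ) (α : Fin d →₀ ℕ) : Option (Fin d) →₀ ℕ :=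
  Finsupp.single none k + α.mapDomain some

/-- Evaluation of a space-time polynomial at time `t = 0`. -/
noncomputable def evalTimeZero {d : ℕ} :
    MvPolynomial (Option (Fin d)) ℝ →ₐ[ℝ] MvPolynomial (Fin d) ℝ :=
  aeval fun i : Option (Fin d) => i.elim 0 X

namespace MvPolynomial

section Laplacian

variable {σ R : Type*} [CommSemiring R]

theorem coeff_pderiv_pderiv (i : σ) (q : MvPolynomial σ R) (m : σ →₀ ℕ) :
    coeff m (pderiv i (pderiv i q)) =
      ((m i : R) + 2) * ((m i : R) + 1) * coeff (m + Finsupp.single i 2) q := by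
  rw [coeff_pderiv, coeff_pderiv, add_assoc, ← Finsupp.single_add, Finsupp.add_apply,
    Finsupp.single_eq_same]
  push_cast
  ring

variable [Fintype σ]

noncomputable def laplacian : MvPolynomial σ R →ₗ[R] MvPolynomial σ R :=
  ∑ i, (pderiv i).toLinearMap ∘ₗ (pderiv i).toLinearMap

theorem coeff_laplacian (q : MvPolynomial σ R) (m : σ →₀ ℕ) :
    coeff m (laplacian q) =
      ∑ i, ((m i : R) + 2) * ((m i : R) + 1) * coeff (m + Finsupp.single i 2) q := by
  simp [laplacian, coeff_sum, coeff_pderiv_pderiv]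

theorem exists_add_single_two_mem_support_of_mem_support_laplacian {q : MvPolynomial σ R}
    {m : σ →₀ ℕ} (hm : m ∈ (laplacian q).support) :
    ∃ i, m + Finsupp.single i 2 ∈ q.support := by
  rw [mem_support_iff, coeff_laplacian] at hm
  obtain ⟨i, -, hi⟩ := Finset.exists_ne_zero_of_sum_ne_zero hm
  exact ⟨i, mem_support_iff.2 (right_ne_zero_of_mul hi)⟩

end Laplacian

end MvPolynomial

section Expo

variable {d : ℕ}

@[simp]
theorem expo_apply_none (k : ℕ) (α : Fin d →₀ ℕ) : expo k α none = k := by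
  simp [expo, Finsupp.mapDomain_of_notMem_range]

@[simp]
theorem expo_apply_some (k : ℕ) (α : Fin d →₀ ℕ) (m : Fin d) :
    expo k α (some m) = α m := by
  simp [expo, Finsupp.mapDomain_apply (Option.some_injective _)]

@[simp]
theorem some_expo (k : ℕ) (α : Fin d →₀ ℕ) : (expo k α).some = α := by
  ext m
  simp

theorem expo_apply_none_some (u : Option (Fin d) →₀ ℕ) : expo (u none) u.some = u := by
  ext (_ | m) <;> simp

theorem expo_add_single_none (k j : ℕ) (α : Fin d →₀ ℕ) :
    expo k α + Finsupp.single none j = expo (k + j) α := by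
  simp only [expo, Finsupp.single_add]
  abel

theorem expo_add_single_some (k j : ℕ) (α : Fin d →₀ ℕ) (m : Fin d) :
    expo k α + Finsupp.single (some m) j = expo k (α + Finsupp.single m j) := by
  simp only [expo, Finsupp.mapDomain_add, Finsupp.mapDomain_single]
  abel

theorem degree_expo (k : ℕ) (α : Fin d →₀ ℕ) : (expo k α).degree = k + α.degree := by
  simp [expo]

theorem coeff_expo {R : Type*} [CommSemiring R] (U : MvPolynomial (Option (Fin d)) R) (k : ℕ)
    (α : Fin d →₀ ℕ) :
    U.coeff (expo k α) = ((optionEquivLeft R (Fin d) U).coeff k).coeff α := by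
  simpa using (optionEquivLeft_coeff_some_coeff_none R (Fin d) (expo k α) U).symm

end Expo

section TimeCoefficients

variable {d : ℕ}

theorem evalTimeZero_eq_coeff_zero (U : MvPolynomial (Option (Fin d)) ℝ) :
    evalTimeZero U = (optionEquivLeft ℝ (Fin d) U).coeff 0 := by
  have : evalTimeZero = ((Polynomial.aeval (0 : MvPolynomial (Fin d) ℝ)).restrictScalars ℝ).comp
      (optionEquivLeft ℝ (Fin d)).toAlgHom := by
    ext (_ | m) <;> simp [evalTimeZero, optionEquivLeft_X_none, optionEquivLeft_X_some]
  rw [this, Polynomial.coeff_zero_eq_eval_zero]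
  simp

theorem coeff_evalTimeZero (U : MvPolynomial (Option (Fin d)) ℝ) (α : Fin d →₀ ℕ) :
    (evalTimeZero U).coeff α = U.coeff (expo 0 α) := by
  rw [evalTimeZero_eq_coeff_zero, coeff_expo]

theorem coeff_evalTimeZero_pderiv_none (U : MvPolynomial (Option (Fin d)) ℝ)
    (α : Fin d →₀ ℕ) :
    (evalTimeZero (pderiv none U)).coeff α = U.coeff (expo 1 α) := by
  simp [coeff_evalTimeZero, coeff_pderiv, expo_add_single_none]

theorem coeff_waveOp_expo (c : ℝ) (U : MvPolynomial (Option (Fin d)) ℝ) (k : ℕ)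
    (α : Fin d →₀ ℕ) :
    (waveOp c U).coeff (expo k α) =
      (c ^ 2)⁻¹ * (((k : ℝ) + 2) * ((k : ℝ) + 1) * U.coeff (expo (k + 2) α)) -
        ∑ m : Fin d, ((α m : ℝ) + 2) * ((α m : ℝ) + 1) *
          U.coeff (expo k (α + Finsupp.single m 2)) := by
  simp [waveOp, coeff_sum, coeff_pderiv_pderiv, expo_add_single_none, expo_add_single_some]

end TimeCoefficients

section TaylorRecursion

variable {d : ℕ} (c : ℝ)

def SatisfiesTaylorRecursion (U : MvPolynomial (Option (Fin d)) ℝ) : Prop :=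
  ∀ (k : ℕ) (α : Fin d →₀ ℕ), 2 ≤ k →
    U.coeff (expo k α) =
      c ^ 2 / ((k : ℝ) * ((k : ℝ) - 1)) *
        ∑ m : Fin d, ((α m : ℝ) + 2) * ((α m : ℝ) + 1) *
          U.coeff (expo (k - 2) (α + Finsupp.single m 2))

variable {c}

theorem satisfiesTaylorRecursion_iff {U : MvPolynomial (Option (Fin d)) ℝ} :
    SatisfiesTaylorRecursion c U ↔ ∀ (k : ℕ) (α : Fin d →₀ ℕ),
      U.coeff (expo (k + 2) α) =
        c ^ 2 / (((k : ℝ) + 2) * ((k : ℝ) + 1)) *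
          ∑ m : Fin d, ((α m : ℝ) + 2) * ((α m : ℝ) + 1) *
            U.coeff (expo k (α + Finsupp.single m 2)) := by
  have hcast (k : ℕ) :
      ((k + 2 : ℕ) : ℝ) * ((k + 2 : ℕ) - 1 : ℝ) = ((k : ℝ) + 2) * ((k : ℝ) + 1) := by
    push_cast
    ring
  constructor
  · intro h k α
    rw [h (k + 2) α le_add_self, Nat.add_sub_cancel, hcast]
  · intro h k α hk
    obtain ⟨k, rfl⟩ := Nat.exists_eq_add_of_le' hk
    rw [h, Nat.add_sub_cancel, hcast]

namespace SatisfiesTaylorRecursion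

variable {U V : MvPolynomial (Option (Fin d)) ℝ}

theorem waveOp_eq_zero (hc : c ≠ 0) (hU : SatisfiesTaylorRecursion c U) : waveOp c U = 0 := by
  ext u
  rw [← expo_apply_none_some u, coeff_waveOp_expo, satisfiesTaylorRecursion_iff.1 hU, coeff_zero]
  field_simp
  ring

theorem eq_of_evalTimeZero_eq (hU : SatisfiesTaylorRecursion c U)
    (hV : SatisfiesTaylorRecursion c V) (h₀ : evalTimeZero U = evalTimeZero V)
    (h₁ : evalTimeZero (pderiv none U) = evalTimeZero (pderiv none V)) : U = V := by
  suffices h : ∀ k α, U.coeff (expo k α) = V.coeff (expo k α) by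
    ext u
    rw [← expo_apply_none_some u]
    exact h _ _
  intro k
  induction k using Nat.twoStepInduction with
  | zero => simpa only [MvPolynomial.ext_iff, coeff_evalTimeZero] using h₀
  | one => simpa only [MvPolynomial.ext_iff, coeff_evalTimeZero_pderiv_none] using h₁
  | more k ih _ =>
    intro α
    simp only [satisfiesTaylorRecursion_iff.1 hU, satisfiesTaylorRecursion_iff.1 hV, ih]

end SatisfiesTaylorRecursion

end TaylorRecursion

section TaylorCoefficients

variable {σ K : Type*} [Fintype σ] [Field K] (c : K) (b bt : MvPolynomial σ K)

noncomputable def waveTaylorCoeff : ℕ → MvPolynomial σ K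
  | 0 => b
  | 1 => bt
  | k + 2 => (c ^ 2 / (((k : K) + 2) * ((k : K) + 1))) • laplacian (waveTaylorCoeff k)

variable {c b bt} {p : ℕ}

theorem add_degree_le_of_mem_support_waveTaylorCoeff (hp : 1 ≤ p) (hb : b.totalDegree ≤ p)
    (hbt : bt.totalDegree ≤ p - 1) :
    ∀ (k : ℕ) {α : σ →₀ ℕ}, α ∈ (waveTaylorCoeff c b bt k).support →
      k + α.degree ≤ p
  | 0, α, hα => by
    have : α.degree ≤ b.totalDegree := le_totalDegree hα
    omega
  | 1, α, hα => by
    have : α.degree ≤ bt.totalDegree := le_totalDegree hα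
    omega
  | k + 2, α, hα => by
    obtain ⟨i, hi⟩ :=
      exists_add_single_two_mem_support_of_mem_support_laplacian (support_smul hα)
    have := add_degree_le_of_mem_support_waveTaylorCoeff hp hb hbt k hi
    simp only [map_add, Finsupp.degree_single] at this
    omega

theorem waveTaylorCoeff_eq_zero (hp : 1 ≤ p) (hb : b.totalDegree ≤ p)
    (hbt : bt.totalDegree ≤ p - 1) {k : ℕ} (hk : p < k) : waveTaylorCoeff c b bt k = 0 := by
  refine support_eq_empty.1 (Finset.eq_empty_of_forall_notMem fun α hα => ?_)
  have := add_degree_le_of_mem_support_waveTaylorCoeff hp hb hbt k hα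
  omega

end TaylorCoefficients

section TaylorExtension

variable {d : ℕ} (c : ℝ) (b bt : MvPolynomial (Fin d) ℝ) (p : ℕ)

noncomputable def waveTaylorExtension : MvPolynomial (Option (Fin d)) ℝ :=
  (optionEquivLeft ℝ (Fin d)).symm
    (∑ k ∈ Finset.range (p + 1), Polynomial.monomial k (waveTaylorCoeff c b bt k))

variable {c b bt p}

theorem coeff_expo_waveTaylorExtension (hp : 1 ≤ p) (hb : b.totalDegree ≤ p)
    (hbt : bt.totalDegree ≤ p - 1) (k : ℕ) (α : Fin d →₀ ℕ) :
    (waveTaylorExtension c b bt p).coeff (expo k α) = (waveTaylorCoeff c b bt k).coeff α := by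
  rw [waveTaylorExtension, coeff_expo, AlgEquiv.apply_symm_apply, Polynomial.finsetSum_coeff]
  simp only [Polynomial.coeff_monomial, Finset.sum_ite_eq', Finset.mem_range]
  split_ifs with hk
  · rfl
  · rw [waveTaylorCoeff_eq_zero hp hb hbt (by omega), coeff_zero]

theorem totalDegree_waveTaylorExtension_le (hp : 1 ≤ p) (hb : b.totalDegree ≤ p)
    (hbt : bt.totalDegree ≤ p - 1) : (waveTaylorExtension c b bt p).totalDegree ≤ p := by
  refine Finset.sup_le fun u hu => ?_
  rw [← expo_apply_none_some u, mem_support_iff,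
    coeff_expo_waveTaylorExtension hp hb hbt] at hu
  change u.degree ≤ p
  rw [← expo_apply_none_some u, degree_expo]
  exact add_degree_le_of_mem_support_waveTaylorCoeff hp hb hbt _ (mem_support_iff.2 hu)

theorem satisfiesTaylorRecursion_waveTaylorExtension (hp : 1 ≤ p) (hb : b.totalDegree ≤ p)
    (hbt : bt.totalDegree ≤ p - 1) :
    SatisfiesTaylorRecursion c (waveTaylorExtension c b bt p) := by
  rw [satisfiesTaylorRecursion_iff]
  intro k α
  simp only [coeff_expo_waveTaylorExtension hp hb hbt]
  rw [waveTaylorCoeff, coeff_smul, coeff_laplacian, smul_eq_mul]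

theorem evalTimeZero_waveTaylorExtension (hp : 1 ≤ p) (hb : b.totalDegree ≤ p)
    (hbt : bt.totalDegree ≤ p - 1) : evalTimeZero (waveTaylorExtension c b bt p) = b := by
  ext α
  rw [coeff_evalTimeZero, coeff_expo_waveTaylorExtension hp hb hbt, waveTaylorCoeff]

theorem evalTimeZero_pderiv_waveTaylorExtension (hp : 1 ≤ p) (hb : b.totalDegree ≤ p)
    (hbt : bt.totalDegree ≤ p - 1) :
    evalTimeZero (pderiv none (waveTaylorExtension c b bt p)) = bt := by
  ext α
  rw [coeff_evalTimeZero_pderiv_none, coeff_expo_waveTaylorExtension hp hb hbt, waveTaylorCoeff]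

end TaylorExtension

theorem stmt6 {d p : ℕ} (hp : 1 ≤ p) (c : ℝ) (hc : 0 < c)
    (b : MvPolynomial (Fin d) ℝ) (hb : b.totalDegree ≤ p)
    (bt : MvPolynomial (Fin d) ℝ) (hbt : bt.totalDegree ≤ p - 1) :
    ∃! U : MvPolynomial (Option (Fin d)) ℝ,
      U.totalDegree ≤ p ∧ waveOp c U = 0 ∧
      evalTimeZero U = b ∧
      evalTimeZero (pderiv (none : Option (Fin d)) U) = bt ∧
      (∀ (k : ℕ) (α : Fin d →₀ ℕ), 2 ≤ k →
        U.coeff (expo k α) =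
          c ^ 2 / ((k : ℝ) * ((k : ℝ) - 1)) *
            ∑ m : Fin d, ((α m : ℝ) + 2) * ((α m : ℝ) + 1) *
              U.coeff (expo (k - 2) (α + Finsupp.single m 2))) := by
  have hU₀ := evalTimeZero_waveTaylorExtension (c := c) hp hb hbt
  have hU₁ := evalTimeZero_pderiv_waveTaylorExtension (c := c) hp hb hbt
  have hrec := satisfiesTaylorRecursion_waveTaylorExtension (c := c) hp hb hbt
  refine ⟨waveTaylorExtension c b bt p, ⟨totalDegree_waveTaylorExtension_le hp hb hbt,
    hrec.waveOp_eq_zero hc.ne', hU₀, hU₁, hrec⟩, ?_⟩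
  rintro V ⟨-, -, hV₀, hV₁, hVrec⟩
  exact SatisfiesTaylorRecursion.eq_of_evalTimeZero_eq hVrec hrec (hV₀.trans hU₀.symm)
    (hV₁.trans hU₁.symm)
end
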